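/- There is a universal constant C > 0 such that for every Schwartz function θ : ℝ² → ℝ and every h ∈ ℝ², ‖θ(·−h) − θ‖²_{L⁴(ℝ²)} ≤ C |h|^{1/2} ‖θ‖_{L^∞(ℝ²)} ( (2π)^{−2} ∫_{ℝ²} |ξ| |θ̂(ξ)|² dξ )^{1/2}. -/

import Mathlib

open MeasureTheory Filter Topology Real Set
open scoped RealInnerProductSpace
noncomputable section

/-- The plane, with its Euclidean structure. -/
abbrev E2 : Type := EuclideanSpace ℝ (Fin 2)

/-- Partial derivative `∂ᵢ g` at `x`. -/
def pd (i : Fin 2) (g : E2 → ℝ) (x : E2) : ℝ := fderiv ℝ g x (EuclideanSpace.single i 1)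

/-- Laplacian `Δ g` at `x`. -/
def lap (g : E2 → ℝ) (x : E2) : ℝ := ∑ i : Fin 2, pd i (pd i g) x

/-- Perpendicular gradient `∇^⊥ψ = (−∂₂ψ, ∂₁ψ)`. -/
def gradPerp (ψ : E2 → ℝ) (x : E2) : Fin 2 → ℝ := ![-(pd 1 ψ x), pd 0 ψ x]

/-- The Fourier transform `ĝ(ξ) = ∫ e^{−i x·ξ} g(x) dx` of `g : ℝ² → ℝ`. -/
def ft (g : E2 → ℝ) (ξ : E2) : ℂ :=
  ∫ x : E2, Complex.exp (-Complex.I * ((⟪x, ξ⟫ : ℝ) : ℂ)) * (g x : ℂ)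

/-- `L` is the half-Laplacian `Λ = (−Δ)^{1/2}` of `g`, defined on the Fourier side by
`Λg(x) = (2π)^{−2} ∫ e^{i x·ξ} |ξ| ĝ(ξ) dξ`. -/
def IsFourierHalfLap (g L : E2 → ℝ) : Prop :=
  ∀ x : E2, (L x : ℂ)
    = ((((2 * π)^2)⁻¹ : ℝ) : ℂ)
        * ∫ ξ : E2, Complex.exp (Complex.I * ((⟪x, ξ⟫ : ℝ) : ℂ)) * (‖ξ‖ : ℂ) * ft g ξ

/-!
Put `δ = θ(· - h) - θ`. Since `|δ| ≤ 2‖θ‖_∞`, we get `‖δ‖₄⁴ ≤ 4‖θ‖_∞² ‖δ‖₂²`. By Plancherel,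
`‖δ‖₂² = ∫ |𝐞(-⟪h, ξ⟫) - 1|² |𝓕θ(ξ)|² dξ`, and `|e^{it} - 1|² ≤ 2|e^{it} - 1| ≤ 2|t|` turns this into
`‖δ‖₂² ≤ 4π|h| ∫ |ξ| |𝓕θ(ξ)|² dξ`. Mathlib's `𝓕` uses the phase `e^{-2πi⟪x, ξ⟫}`, so `ft θ ξ` is
`𝓕θ(ξ / 2π)`, and the change of variables `ξ ↦ 2πξ` identifies the two weighted integrals.
-/

open scoped FourierTransform SchwartzMap

lemma Real.norm_fourierChar_sub_one_sq_le (t : ℝ) : ‖(𝐞 t : ℂ) - 1‖ ^ 2 ≤ 4 * π * |t| := by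
  have hle : ‖(𝐞 t : ℂ) - 1‖ ≤ 2 * π * |t| := by
    rw [Real.fourierChar_apply, mul_comm]
    simpa [abs_mul, abs_of_pos pi_pos] using
      Real.norm_exp_I_mul_ofReal_sub_one_le (x := 2 * π * t)
  have htwo : ‖(𝐞 t : ℂ) - 1‖ ≤ 2 := by
    refine (norm_sub_le _ _).trans_eq ?_
    rw [Circle.norm_coe, norm_one, one_add_one_eq_two]
  calc ‖(𝐞 t : ℂ) - 1‖ ^ 2 = ‖(𝐞 t : ℂ) - 1‖ * ‖(𝐞 t : ℂ) - 1‖ := sq _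
    _ ≤ 2 * (2 * π * |t|) := mul_le_mul htwo hle (norm_nonneg _) zero_le_two
    _ = 4 * π * |t| := by ring

lemma integral_pow_four_le_of_abs_le {α : Type*} [MeasurableSpace α] {μ : Measure α}
    {q : α → ℝ} {K : ℝ} (hq : Integrable (fun x ↦ q x ^ 2) μ) (hK : ∀ x, |q x| ≤ K) :
    ∫ x, q x ^ 4 ∂μ ≤ K ^ 2 * ∫ x, q x ^ 2 ∂μ := by
  rw [← integral_const_mul]
  refine integral_mono_of_nonneg (ae_of_all _ fun x ↦ by positivity) (hq.const_mul _)
    (ae_of_all _ fun x ↦ ?_)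
  have hsq : q x ^ 2 ≤ K ^ 2 := sq_le_sq' (abs_le.1 (hK x)).1 (abs_le.1 (hK x)).2
  calc q x ^ 4 = q x ^ 2 * q x ^ 2 := by ring
    _ ≤ K ^ 2 * q x ^ 2 := mul_le_mul_of_nonneg_right hsq (sq_nonneg _)

variable {V : Type*} [NormedAddCommGroup V] [InnerProductSpace ℝ V] [FiniteDimensional ℝ V]
  [MeasurableSpace V] [BorelSpace V]

lemma Real.fourier_comp_sub_const {E : Type*} [NormedAddCommGroup E] [NormedSpace ℂ E]
    (f : V → E) (h ξ : V) : 𝓕 (fun x ↦ f (x - h)) ξ = 𝐞 (-⟪h, ξ⟫) • 𝓕 f ξ := by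
  have := congrFun (VectorFourier.fourierIntegral_comp_add_right 𝐞 volume (innerₗ V) f (-h)) ξ
  simp only [Function.comp_def, ← sub_eq_add_neg, innerₗ_apply_apply, inner_neg_left] at this
  exact this

namespace SchwartzMap

lemma norm_le_iSup_norm {D F : Type*} [NormedAddCommGroup D] [NormedSpace ℝ D]
    [NormedAddCommGroup F] [NormedSpace ℝ F] (f : 𝓢(D, F)) (x : D) : ‖f x‖ ≤ ⨆ y, ‖f y‖ :=
  le_ciSup ⟨_, Set.forall_mem_range.2 f.toBoundedContinuousFunction.norm_coe_le_norm⟩ x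

lemma integrable_norm_mul_norm_sq {F : Type*} [NormedAddCommGroup F]
    [NormedSpace ℝ F] (g : 𝓢(V, F)) : Integrable (fun ξ ↦ ‖ξ‖ * ‖g ξ‖ ^ 2) := by
  obtain ⟨C, -, hC⟩ := g.decay 0 0
  refine ((g.integrable_pow_mul volume 1).const_mul C).mono'
    (by fun_prop) (ae_of_all _ fun ξ ↦ ?_)
  have hg : ‖g ξ‖ ≤ C := by simpa using hC ξ
  rw [norm_of_nonneg (by positivity), pow_one, sq, ← mul_assoc, mul_comm C]
  exact mul_le_mul_of_nonneg_left hg (by positivity)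

lemma fourier_sub_comp_sub_const {E : Type*} [NormedAddCommGroup E] [NormedSpace ℂ E]
    [CompleteSpace E] (f : 𝓢(V, E)) (h ξ : V) :
    𝓕 (f.compSubConstCLM ℂ h - f) ξ = ((𝐞 (-⟪h, ξ⟫) : ℂ) - 1) • 𝓕 f ξ := by
  rw [sub_eq_add_neg, FourierTransform.fourier_add, FourierTransform.fourier_neg, add_apply,
    neg_apply, fourier_coe, fourier_coe, sub_smul, one_smul, ← sub_eq_add_neg, ← Circle.smul_def]
  exact congrArg (· - 𝓕 (f : V → E) ξ) (Real.fourier_comp_sub_const f h ξ)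

lemma integral_norm_sq_sub_comp_sub_const_le {H : Type*} [NormedAddCommGroup H]
    [InnerProductSpace ℂ H] [CompleteSpace H] (f : 𝓢(V, H)) (h : V) :
    ∫ x, ‖f (x - h) - f x‖ ^ 2 ≤ 4 * π * ‖h‖ * ∫ ξ, ‖ξ‖ * ‖𝓕 (f : V → H) ξ‖ ^ 2 := by
  have hpointwise (ξ : V) :
      ‖𝓕 (f.compSubConstCLM ℂ h - f) ξ‖ ^ 2 ≤ 4 * π * ‖h‖ * (‖ξ‖ * ‖𝓕 (f : V → H) ξ‖ ^ 2) := by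
    rw [fourier_sub_comp_sub_const, norm_smul, mul_pow, ← fourier_coe]
    have hinner : |⟪h, ξ⟫| ≤ ‖h‖ * ‖ξ‖ := abs_real_inner_le_norm h ξ
    calc ‖(𝐞 (-⟪h, ξ⟫) : ℂ) - 1‖ ^ 2 * ‖𝓕 f ξ‖ ^ 2 ≤ 4 * π * |⟪h, ξ⟫| * ‖𝓕 f ξ‖ ^ 2 := by
          gcongr
          simpa using Real.norm_fourierChar_sub_one_sq_le (-⟪h, ξ⟫)
      _ ≤ 4 * π * (‖h‖ * ‖ξ‖) * ‖𝓕 f ξ‖ ^ 2 := by gcongr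
      _ = _ := by ring
  calc ∫ x, ‖f (x - h) - f x‖ ^ 2 = ∫ ξ, ‖𝓕 (f.compSubConstCLM ℂ h - f) ξ‖ ^ 2 :=
        ((f.compSubConstCLM ℂ h - f).integral_norm_sq_fourier).symm
    _ ≤ ∫ ξ, 4 * π * ‖h‖ * (‖ξ‖ * ‖𝓕 (f : V → H) ξ‖ ^ 2) :=
        integral_mono_of_nonneg (ae_of_all _ fun _ ↦ by positivity)
          ((integrable_norm_mul_norm_sq (𝓕 f)).const_mul _) (ae_of_all _ hpointwise)
    _ = 4 * π * ‖h‖ * ∫ ξ, ‖ξ‖ * ‖𝓕 (f : V → H) ξ‖ ^ 2 := integral_const_mul _ _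

theorem integral_sub_comp_sub_const_pow_four_le (θ : 𝓢(V, ℝ)) (h : V) :
    ∫ x, (θ (x - h) - θ x) ^ 4
      ≤ 16 * π * (⨆ x, |θ x|) ^ 2 * ‖h‖ * ∫ ξ, ‖ξ‖ * ‖𝓕 (fun x ↦ (θ x : ℂ)) ξ‖ ^ 2 := by
  set M := ⨆ x, |θ x|
  have hM (x : V) : |θ x| ≤ M := θ.norm_le_iSup_norm x
  have hinc (x : V) : |θ (x - h) - θ x| ≤ 2 * M :=
    (abs_sub _ _).trans (by linarith [hM (x - h), hM x])
  have hsq : Integrable (fun x ↦ (θ (x - h) - θ x) ^ 2) :=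
    ((θ.compSubConstCLM ℝ h - θ).memLp 2 volume).integrable_sq
  have hL2 := (θ.postcompCLM Complex.ofRealCLM).integral_norm_sq_sub_comp_sub_const_le h
  simp only [postcompCLM_apply, Complex.ofRealCLM_apply, ← Complex.ofReal_sub,
    Complex.norm_real, Real.norm_eq_abs, sq_abs] at hL2
  calc ∫ x, (θ (x - h) - θ x) ^ 4 ≤ (2 * M) ^ 2 * ∫ x, (θ (x - h) - θ x) ^ 2 :=
        integral_pow_four_le_of_abs_le hsq hinc
    _ ≤ (2 * M) ^ 2 * (4 * π * ‖h‖ * ∫ ξ, ‖ξ‖ * ‖𝓕 (fun x ↦ (θ x : ℂ)) ξ‖ ^ 2) := by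
        gcongr
        exact hL2
    _ = _ := by ring

end SchwartzMap

lemma ft_eq_fourier_inv_smul (g : E2 → ℝ) (ξ : E2) :
    ft g ξ = 𝓕 (fun x ↦ (g x : ℂ)) ((2 * π)⁻¹ • ξ) := by
  rw [Real.fourier_eq', ft]
  congr 1 with x
  have hcancel : -2 * π * (2 * π)⁻¹ = -1 := by field_simp
  rw [smul_eq_mul, real_inner_smul_right, ← mul_assoc, hcancel]
  push_cast
  ring_nf

lemma inv_sq_two_pi_mul_integral_norm_mul_norm_ft_sq (g : E2 → ℝ) :
    ((2 * π) ^ 2)⁻¹ * ∫ ξ, ‖ξ‖ * ‖ft g ξ‖ ^ 2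
      = 2 * π * ∫ η, ‖η‖ * ‖𝓕 (fun x ↦ (g x : ℂ)) η‖ ^ 2 := by
  set F : E2 → ℝ := fun η ↦ 2 * π * (‖η‖ * ‖𝓕 (fun x ↦ (g x : ℂ)) η‖ ^ 2)
  have hF (ξ : E2) : ‖ξ‖ * ‖ft g ξ‖ ^ 2 = F ((2 * π)⁻¹ • ξ) := by
    rw [ft_eq_fourier_inv_smul]
    simp only [F]
    rw [norm_smul, norm_inv, Real.norm_of_nonneg (by positivity)]
    field_simp
  simp_rw [hF]
  rw [Measure.integral_comp_inv_smul, finrank_euclideanSpace_fin, smul_eq_mul,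
    abs_of_pos (by positivity), inv_mul_cancel_left₀ (by positivity), integral_const_mul]

/-- The `L⁴` interpolation bound for increments: there is a universal `C > 0` with
`‖θ(·−h) − θ‖²_{L⁴} ≤ C |h|^{1/2} ‖θ‖_{L^∞} ((2π)^{−2}∫ |ξ||θ̂(ξ)|²dξ)^{1/2}`
for every Schwartz `θ` and every `h ∈ ℝ²`. -/
theorem stmt12 :
    ∃ C : ℝ, 0 < C ∧
      ∀ (θ : SchwartzMap E2 ℝ) (h : E2),
        Real.sqrt (∫ x : E2, (θ (x - h) - θ x)^4)
          ≤ C * Real.sqrt ‖h‖ * (⨆ x : E2, |θ x|)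
              * Real.sqrt (((2 * π)^2)⁻¹ * ∫ ξ : E2, ‖ξ‖ * ‖ft (⇑θ) ξ‖^2) := by
  refine ⟨Real.sqrt 8, by positivity, fun θ h ↦ ?_⟩
  set M := ⨆ x, |θ x|
  set X := ∫ η, ‖η‖ * ‖𝓕 (fun x ↦ (θ x : ℂ)) η‖ ^ 2
  have hM : 0 ≤ M := (abs_nonneg _).trans (θ.norm_le_iSup_norm 0)
  rw [inv_sq_two_pi_mul_integral_norm_mul_norm_ft_sq]
  calc Real.sqrt (∫ x, (θ (x - h) - θ x) ^ 4) ≤ Real.sqrt (16 * π * M ^ 2 * ‖h‖ * X) :=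
        Real.sqrt_le_sqrt (θ.integral_sub_comp_sub_const_pow_four_le h)
    _ = Real.sqrt (8 * ‖h‖ * M ^ 2 * (2 * π * X)) := by ring_nf
    _ = Real.sqrt 8 * Real.sqrt ‖h‖ * M * Real.sqrt (2 * π * X) := by
        rw [Real.sqrt_mul' _ (by positivity), Real.sqrt_mul' _ (sq_nonneg M), Real.sqrt_sq hM,
          Real.sqrt_mul' _ (norm_nonneg h)]
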